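/- Every linearly ordered strict wEMV-algebra (M; ∨, ∧, ⊕, ⊖, 0) is cancellative; that is, if the lattice order of M is total and M has no nonzero idempotent element, then for all x, y, z ∈ M, x ⊕ z = y ⊕ z implies x = y. -/

import Mathlib

/-!
If `u ⊕ t = u`, then `t` is disjoint from every difference `w ⊖ u`, because subtracting `t`
from `w ⊖ u` changes nothing. In a chain, taking `w = u ⊕ u`, either `t = 0` or
`(u ⊕ u) ⊖ u = 0`; the latter makes `u` idempotent, hence `0`, and then `t = 0 ⊕ t = u = 0`
as well. Thus `0` is the only summand any element absorbs, and cancellation follows by writing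
the larger of `x, y` as the smaller one plus their difference.
-/

universe u

class WEMV (M : Type u) extends DistribLattice M, Zero M where
  oplus : M → M → M
  ominus : M → M → M
  zero_le : ∀ x : M, 0 ≤ x
  oplus_comm : ∀ x y : M, oplus x y = oplus y x
  oplus_assoc : ∀ x y z : M, oplus (oplus x y) z = oplus x (oplus y z)
  oplus_zero : ∀ x : M, oplus x 0 = x
  ominus_oplus_le : ∀ x y : M, ominus (oplus x y) x ≤ y
  oplus_ominus : ∀ x y : M, oplus x (ominus y x) = x ⊔ y
  ominus_inf : ∀ x y : M, ominus x (x ⊓ y) = ominus x y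
  ominus_ominus : ∀ x z : M, ominus z (ominus z x) = x ⊓ z
  ominus_sup : ∀ x y z : M, ominus z (x ⊔ y) = ominus z x ⊓ ominus z y
  inf_ominus : ∀ x y z : M, ominus (x ⊓ y) z = ominus x z ⊓ ominus y z
  ominus_oplus_assoc : ∀ x y z : M, ominus x (oplus y z) = ominus (ominus x y) z
  oplus_sup : ∀ x y z : M, oplus x (y ⊔ z) = oplus x y ⊔ oplus x z

open WEMV

namespace WEMV

variable {M : Type u} [WEMV M]

theorem ominus_self (a : M) : ominus a a = 0 := by
  have h := ominus_oplus_le a 0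
  rw [oplus_zero] at h
  exact le_antisymm h (zero_le _)

theorem le_oplus (x y : M) : x ≤ oplus x y := by
  have h := oplus_sup x 0 y
  rw [oplus_zero, sup_eq_right.mpr (zero_le y)] at h
  exact h ▸ le_sup_left

theorem zero_oplus (x : M) : oplus 0 x = x := by
  rw [oplus_comm, oplus_zero]

theorem oplus_ominus_of_le {a b : M} (hab : a ≤ b) : oplus a (ominus b a) = b := by
  rw [oplus_ominus, sup_eq_right.mpr hab]

theorem oplus_eq_self_of_ominus_eq_zero {x y : M} (h : ominus (oplus x y) x = 0) :
    oplus x y = x := by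
  calc oplus x y = oplus x (ominus (oplus x y) x) := (oplus_ominus_of_le (le_oplus x y)).symm
    _ = x := by rw [h, oplus_zero]

theorem inf_ominus_eq_zero_of_oplus_eq_self {u t : M} (h : oplus u t = u) (w : M) :
    t ⊓ ominus w u = 0 := by
  have hfix : ominus (ominus w u) t = ominus w u := by
    rw [← ominus_oplus_assoc, h]
  rw [← ominus_ominus, hfix, ominus_self]

theorem eq_zero_of_oplus_eq_self (htot : ∀ x y : M, x ≤ y ∨ y ≤ x)
    (hstrict : ∀ a : M, oplus a a = a → a = 0) {u t : M} (h : oplus u t = u) : t = 0 := by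
  have hdisj := inf_ominus_eq_zero_of_oplus_eq_self h (oplus u u)
  rcases htot t (ominus (oplus u u) u) with hle | hle
  · rwa [inf_eq_left.mpr hle] at hdisj
  · rw [inf_eq_right.mpr hle] at hdisj
    have hu : u = 0 := hstrict u (oplus_eq_self_of_ominus_eq_zero hdisj)
    subst hu
    rwa [zero_oplus] at h

theorem eq_of_le_of_oplus_eq (habsorb : ∀ u t : M, oplus u t = u → t = 0) {a b z : M}
    (hab : a ≤ b) (h : oplus a z = oplus b z) : a = b := by
  have hdiff : oplus (oplus a z) (ominus b a) = oplus a z := by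
    rw [oplus_assoc, oplus_comm z, ← oplus_assoc, oplus_ominus_of_le hab, h]
  have hzero := habsorb _ _ hdiff
  rw [← oplus_ominus_of_le hab, hzero, oplus_zero]

end WEMV

theorem stmt13 {M : Type u} [WEMV M]
    (htot : ∀ x y : M, x ≤ y ∨ y ≤ x)
    (hstrict : ∀ a : M, oplus a a = a → a = 0) :
    ∀ x y z : M, oplus x z = oplus y z → x = y := by
  intro x y z h
  have habsorb : ∀ u t : M, oplus u t = u → t = 0 :=
    fun _ _ => eq_zero_of_oplus_eq_self htot hstrict
  rcases htot x y with hxy | hyx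
  · exact eq_of_le_of_oplus_eq habsorb hxy h
  · exact (eq_of_le_of_oplus_eq habsorb hyx h.symm).symm
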